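/- Fix N ≥ 1, n ∈ ℕ, multi-indices I, J ∈ ℕ^N and k ∈ ℕ with |J| + k ≤ n. Define the operator M[f] := x^I · ( (n−|J| − E)_k [ D_J f ] ). Then: (1) for every multi-index K, M[x^K] lies in the linear span of the monomials of total degree |K| + |I| − |J| (so M has degree |I| − |J|); (2) M maps every polynomial of total degree at most n to a polynomial of total degree at most n − (|J| + k − |I|), i.e. M has deficiency at least |J| + k − |I| relative to P_n^N; and (3) there exists a polynomial f of total degree at most n such that M[f] has total degree exactly n − (|J| + k − |I|). -/

import Mathlib

open MvPolynomial

/-- The weight `|J| = j_1 + ⋯ + j_N` of a multi-index. -/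
def mwt {N : ℕ} (J : Fin N → ℕ) : ℕ := ∑ i, J i

/-- The monomial `x^I = x_1^{i_1} ⋯ x_N^{i_N}`. -/
noncomputable def xPow {N : ℕ} (I : Fin N → ℕ) : MvPolynomial (Fin N) ℝ :=
  ∏ i, (X i : MvPolynomial (Fin N) ℝ) ^ I i

/-- The differential operator `D_J = ∂_{x_1}^{j_1} ⋯ ∂_{x_N}^{j_N}`. -/
noncomputable def DJ {N : ℕ} (J : Fin N → ℕ) :
    MvPolynomial (Fin N) ℝ →ₗ[ℝ] MvPolynomial (Fin N) ℝ :=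
  (((List.finRange N).map fun i =>
    (((pderiv i : Derivation ℝ (MvPolynomial (Fin N) ℝ) (MvPolynomial (Fin N) ℝ)).toLinearMap :
      Module.End ℝ (MvPolynomial (Fin N) ℝ)) ^ (J i))).prod)

/-- The Euler operator `E = ∑ x_i ∂_{x_i}`. -/
noncomputable def Euler (N : ℕ) : MvPolynomial (Fin N) ℝ →ₗ[ℝ] MvPolynomial (Fin N) ℝ :=
  ∑ i : Fin N, (LinearMap.mulLeft ℝ (X i : MvPolynomial (Fin N) ℝ)).comp
    (pderiv i : Derivation ℝ (MvPolynomial (Fin N) ℝ) (MvPolynomial (Fin N) ℝ)).toLinearMap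

/-- The Pochhammer operator `(a − E)_k = (a − E)∘((a−1) − E)∘⋯∘((a−k+1) − E)`,
the identity when `k = 0`. -/
noncomputable def pochE (N : ℕ) (a : ℤ) :
    ℕ → (MvPolynomial (Fin N) ℝ →ₗ[ℝ] MvPolynomial (Fin N) ℝ)
  | 0 => LinearMap.id
  | k + 1 => ((a : ℝ) • (LinearMap.id : MvPolynomial (Fin N) ℝ →ₗ[ℝ] MvPolynomial (Fin N) ℝ)
      - Euler N).comp (pochE N (a - 1) k)

-- helpers
noncomputable def toF {N : ℕ} (K : Fin N → ℕ) : Fin N →₀ ℕ := Finsupp.equivFunOnFinite.symm K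

@[simp] lemma toF_apply {N : ℕ} (K : Fin N → ℕ) (i : Fin N) : toF K i = K i := rfl

lemma degree_eq {N : ℕ} (t : Fin N →₀ ℕ) : t.degree = ∑ i, t i :=
  Finset.sum_subset (Finset.subset_univ _) (by intro i _ h; simpa using Finsupp.notMem_support_iff.mp h)

lemma sum_eq_degree {N : ℕ} (t : Fin N →₀ ℕ) : (t.sum fun _ e => e) = ∑ i, t i := by
  rw [← degree_eq]; rfl

lemma xPow_eq {N : ℕ} (K : Fin N → ℕ) : xPow K = monomial (toF K) 1 := by
  rw [← prod_X_pow_eq_monomial, xPow]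
  exact (Finset.prod_subset (Finset.subset_univ _) (by
    intro i _ h
    simp only [Finsupp.notMem_support_iff] at h
    rw [show K i = 0 from h, pow_zero])).symm

lemma pderiv_pow_monomial {N : ℕ} (i : Fin N) (m : ℕ) (s : Fin N →₀ ℕ) (a : ℝ) :
    ((((pderiv i : Derivation ℝ (MvPolynomial (Fin N) ℝ) (MvPolynomial (Fin N) ℝ)).toLinearMap :
      Module.End ℝ (MvPolynomial (Fin N) ℝ)) ^ m) (monomial s a)) =
      monomial (s - Finsupp.single i m) (a * (s i).descFactorial m) := by
  induction m with
  | zero => simp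
  | succ m ih =>
    rw [pow_succ', Module.End.mul_apply, ih]
    simp only [Derivation.coeFn_coe, pderiv_monomial]
    congr 1
    · rw [tsub_tsub, ← Finsupp.single_add]
    · rw [Finsupp.tsub_apply, Finsupp.single_eq_same, Nat.descFactorial_succ]
      push_cast [Nat.cast_sub]
      ring

lemma DJ_list_monomial {N : ℕ} (J : Fin N → ℕ) (L : List (Fin N)) (hL : L.Nodup)
    (s : Fin N →₀ ℕ) (a : ℝ) :
    ((L.map fun i =>
    (((pderiv i : Derivation ℝ (MvPolynomial (Fin N) ℝ) (MvPolynomial (Fin N) ℝ)).toLinearMap :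
      Module.End ℝ (MvPolynomial (Fin N) ℝ)) ^ (J i))).prod) (monomial s a)
    = monomial (s - ∑ i ∈ L.toFinset, Finsupp.single i (J i))
        (a * ∏ i ∈ L.toFinset, ((s i).descFactorial (J i) : ℝ)) := by
  induction L with
  | nil => simp
  | cons i L ih =>
    have hnd := (List.nodup_cons.mp hL)
    rw [List.map_cons, List.prod_cons, Module.End.mul_apply, ih hnd.2]
    rw [pderiv_pow_monomial]
    have hiT : i ∉ L.toFinset := by simpa using hnd.1
    have hTi : (∑ j ∈ L.toFinset, Finsupp.single j (J j)) i = 0 := by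
      rw [Finsupp.finset_sum_apply]
      exact Finset.sum_eq_zero fun j hj => Finsupp.single_eq_of_ne' (by rintro rfl; exact hiT hj)
    rw [List.toFinset_cons, Finset.sum_insert hiT, Finset.prod_insert hiT]
    congr 1
    · rw [tsub_tsub, add_comm]
    · rw [Finsupp.tsub_apply, hTi, Nat.sub_zero]; ring

lemma sum_single_eq_toF {N : ℕ} (J : Fin N → ℕ) :
    (∑ i : Fin N, Finsupp.single i (J i)) = toF J := by
  ext j
  rw [Finsupp.finset_sum_apply, Finset.sum_eq_single j
    (fun i _ hne => Finsupp.single_eq_of_ne' hne) (by simp), Finsupp.single_eq_same, toF_apply]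

lemma DJ_monomial {N : ℕ} (J : Fin N → ℕ) (s : Fin N →₀ ℕ) (a : ℝ) :
    DJ J (monomial s a)
    = monomial (s - toF J) (a * ∏ i, ((s i).descFactorial (J i) : ℝ)) := by
  rw [DJ, DJ_list_monomial J _ (List.nodup_finRange N)]
  rw [List.toFinset_finRange, sum_single_eq_toF]

lemma Euler_monomial {N : ℕ} (s : Fin N →₀ ℕ) (a : ℝ) :
    Euler N (monomial s a) = monomial s (a * ∑ i, (s i : ℝ)) := by
  rw [Euler, LinearMap.sum_apply]
  have : ∀ i : Fin N,
      ((LinearMap.mulLeft ℝ (X i : MvPolynomial (Fin N) ℝ)).comp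
        (pderiv i : Derivation ℝ (MvPolynomial (Fin N) ℝ) (MvPolynomial (Fin N) ℝ)).toLinearMap)
        (monomial s a) = monomial s (a * (s i : ℝ)) := by
    intro i
    simp only [LinearMap.comp_apply, Derivation.coeFn_coe, pderiv_monomial,
      LinearMap.mulLeft_apply]
    rcases Nat.eq_zero_or_pos (s i) with h | h
    · simp [h]
    · rw [X, monomial_mul, one_mul]
      congr 1
      rw [add_comm, tsub_add_cancel_of_le]
      rw [Finsupp.single_le_iff]; exact h
  rw [Finset.sum_congr rfl fun i _ => this i, ← map_sum, ← Finset.mul_sum]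

lemma pochE_monomial {N : ℕ} (a : ℤ) (k : ℕ) (s : Fin N →₀ ℕ) (c : ℝ) :
    pochE N a k (monomial s c)
    = monomial s (c * ∏ j ∈ Finset.range k, ((a : ℝ) - j - ∑ i, (s i : ℝ))) := by
  induction k generalizing a c with
  | zero => simp [pochE]
  | succ k ih =>
    rw [pochE, LinearMap.comp_apply, ih, LinearMap.sub_apply, LinearMap.smul_apply,
      LinearMap.id_apply, Euler_monomial, Finset.prod_range_succ']
    rw [smul_monomial, ← map_sub]
    congr 1
    have hp : ∀ j ∈ Finset.range k, ((a - 1 : ℤ) : ℝ) - j - (∑ i, (s i : ℝ))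
        = (a : ℝ) - ((j + 1 : ℕ) : ℝ) - ∑ i, (s i : ℝ) := fun j _ => by push_cast; ring
    simp only [Finset.prod_congr rfl hp, smul_eq_mul]
    push_cast
    ring

lemma M_monomial {N : ℕ} (I J : Fin N → ℕ) (a : ℤ) (k : ℕ) (s : Fin N →₀ ℕ) (c : ℝ) :
    xPow I * pochE N a k (DJ J (monomial s c))
    = monomial (toF I + (s - toF J))
        (c * (∏ i, ((s i).descFactorial (J i) : ℝ)) *
          ∏ j ∈ Finset.range k, ((a : ℝ) - j - ∑ i, (((s - toF J) i : ℕ) : ℝ))) := by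
  rw [DJ_monomial, pochE_monomial, xPow_eq, monomial_mul, one_mul, mul_assoc]

lemma sum_tsub_eq {N : ℕ} (s : Fin N →₀ ℕ) (J : Fin N → ℕ) (h : ∀ i, J i ≤ s i) :
    ∑ i, (s - toF J) i = (∑ i, s i) - mwt J := by
  have h1 : mwt J ≤ ∑ i, s i := Finset.sum_le_sum fun i _ => h i
  have h2 : (∑ i, (s - toF J) i) + mwt J = ∑ i, s i := by
    rw [mwt, ← Finset.sum_add_distrib]
    exact Finset.sum_congr rfl fun i _ => by
      rw [Finsupp.tsub_apply, toF_apply]; have := h i; omega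
  omega


/-- For `|J| + k ≤ n`, the operator `M[f] = x^I·(n−|J|−E)_k[D_J f]`
(1) maps each monomial `x^K` into the span of monomials of total degree `|K|+|I|−|J|`
(i.e. `M[x^K]` is homogeneous of that degree); (2) maps `P_n^N` into
`P^N_{n−(|J|+k−|I|)}`; and (3) attains total degree `n−(|J|+k−|I|) = n+|I|−(|J|+k)`
on some polynomial of total degree at most `n`. -/
theorem mv_operator_degree_deficiency (N n : ℕ) (hN : 1 ≤ N)
    (I J : Fin N → ℕ) (k : ℕ) (hJk : mwt J + k ≤ n) :
    (∀ K : Fin N → ℕ,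
      MvPolynomial.IsHomogeneous (xPow I * pochE N ((n : ℤ) - mwt J) k (DJ J (xPow K)))
        (mwt K + mwt I - mwt J)) ∧
    (∀ f : MvPolynomial (Fin N) ℝ, f.totalDegree ≤ n →
      (xPow I * pochE N ((n : ℤ) - mwt J) k (DJ J f)).totalDegree ≤ n + mwt I - (mwt J + k)) ∧
    (∃ f : MvPolynomial (Fin N) ℝ, f.totalDegree ≤ n ∧
      xPow I * pochE N ((n : ℤ) - mwt J) k (DJ J f) ≠ 0 ∧
      (xPow I * pochE N ((n : ℤ) - mwt J) k (DJ J f)).totalDegree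
        = n + mwt I - (mwt J + k)) := by
  set a : ℤ := (n : ℤ) - mwt J with ha
  have haR : (a : ℝ) = (n : ℝ) - (mwt J : ℝ) := by push_cast [ha]; ring
  refine ⟨?_, ?_, ?_⟩
  · -- part 1
    intro K
    rw [xPow_eq K, M_monomial]
    by_cases hJK : ∀ i, J i ≤ K i
    · apply isHomogeneous_monomial
      rw [degree_eq]
      have h1 : mwt J ≤ mwt K := Finset.sum_le_sum fun i _ => hJK i
      have h2 : ∑ i, (toF K - toF J) i = mwt K - mwt J := by
        rw [sum_tsub_eq (toF K) J (by simpa using hJK)]; rfl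
      have h3 : ∑ i, (toF I + (toF K - toF J)) i
          = mwt I + ∑ i, (toF K - toF J) i := by
        rw [mwt, ← Finset.sum_add_distrib]
        exact Finset.sum_congr rfl fun i _ => by rw [Finsupp.add_apply, toF_apply]
      omega
    · push_neg at hJK
      obtain ⟨i, hi⟩ := hJK
      have hz : ((K i).descFactorial (J i) : ℝ) = 0 := by
        rw [Nat.descFactorial_eq_zero_iff_lt.mpr hi]; norm_num
      have : (1 : ℝ) * (∏ i, (((toF K) i).descFactorial (J i) : ℝ)) *
          ∏ j ∈ Finset.range k, ((a : ℝ) - j - ∑ i, (((toF K - toF J) i : ℕ) : ℝ)) = 0 := by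
        rw [Finset.prod_eq_zero (Finset.mem_univ i) (by simpa using hz)]; ring
      rw [this, map_zero]
      exact isHomogeneous_zero _ _ _
  · -- part 2
    intro f hf
    conv_lhs => rw [f.as_sum, map_sum, map_sum, Finset.mul_sum]
    refine (totalDegree_finset_sum _ _).trans (Finset.sup_le fun s hs => ?_)
    rw [M_monomial]
    set c' := (coeff s f) * (∏ i, (((s) i).descFactorial (J i) : ℝ)) *
      ∏ j ∈ Finset.range k, ((a : ℝ) - j - ∑ i, (((s - toF J) i : ℕ) : ℝ)) with hc'
    by_cases hc : c' = 0
    · rw [hc, map_zero, totalDegree_zero]; exact Nat.zero_le _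
    · have hdesc : ∀ i, J i ≤ s i := by
        intro i
        by_contra hlt
        exact hc (by rw [hc', Finset.prod_eq_zero (Finset.mem_univ i)
          (by rw [Nat.descFactorial_eq_zero_iff_lt.mpr (by omega)]; norm_num)]; ring)
      have hS : (∑ i, s i) ≤ n := by
        have := le_totalDegree hs
        rw [sum_eq_degree] at this
        omega
      have hfac : ∀ j ∈ Finset.range k,
          ((a : ℝ) - j - ∑ i, (((s - toF J) i : ℕ) : ℝ)) ≠ 0 := by
        intro j hj hzero
        exact hc (by rw [hc', Finset.prod_eq_zero hj hzero]; ring)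
      have he : ∑ i, (s - toF J) i = (∑ i, s i) - mwt J := sum_tsub_eq s J hdesc
      have hmJ : mwt J ≤ ∑ i, s i := Finset.sum_le_sum fun i _ => hdesc i
      have hSk : (∑ i, s i) + k ≤ n := by
        by_contra hcon
        have hjk' : n - (∑ i, s i) < k := by omega
        apply hfac (n - ∑ i, s i) (Finset.mem_range.mpr hjk')
        rw [haR, ← Nat.cast_sum, he, Nat.cast_sub hmJ, Nat.cast_sub hS]
        ring
      refine (totalDegree_monomial_le _ _).trans ?_
      have ht : ((toF I + (s - toF J)).sum fun _ e => id e)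
          = mwt I + ∑ i, (s - toF J) i := by
        rw [show ((toF I + (s - toF J)).sum fun _ e => id e)
            = ∑ i, (toF I + (s - toF J)) i from sum_eq_degree _]
        rw [mwt, ← Finset.sum_add_distrib]
        exact Finset.sum_congr rfl fun i _ => by rw [Finsupp.add_apply, toF_apply]
      rw [ht]
      omega
  · -- part 3
    set i₀ : Fin N := ⟨0, hN⟩
    set m : ℕ := n - (mwt J + k) with hm
    set s : Fin N →₀ ℕ := toF J + Finsupp.single i₀ m with hsdef
    have hmn : m + (mwt J + k) = n := by omega
    have hsingle_sum : ∑ i, (Finsupp.single i₀ m) i = m :=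
      (Finset.sum_eq_single i₀ (fun j _ hj => Finsupp.single_eq_of_ne' (Ne.symm hj))
        (by simp)).trans Finsupp.single_eq_same
    have hexp : ∀ (T : Fin N → ℕ), ∑ i, (toF T + Finsupp.single i₀ m) i = mwt T + m := by
      intro T
      rw [mwt, show ∑ i, (toF T + Finsupp.single i₀ m) i
          = ∑ i, (T i + (Finsupp.single i₀ m) i) from
        Finset.sum_congr rfl fun i _ => by rw [Finsupp.add_apply, toF_apply],
        Finset.sum_add_distrib, hsingle_sum]
    have hSsum : ∑ i, s i = mwt J + m := by rw [hsdef]; exact hexp J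
    have hsub : s - toF J = Finsupp.single i₀ m := by
      rw [hsdef, add_tsub_cancel_left]
    have hsJ : ∀ i, J i ≤ s i := fun i => by
      rw [hsdef, Finsupp.add_apply, toF_apply]; omega
    have hmR : ((m : ℕ) : ℝ) = (n : ℝ) - (mwt J : ℝ) - (k : ℝ) := by
      have := hmn; push_cast [← this]; ring
    refine ⟨monomial s 1, ?_, ?_⟩
    · rw [totalDegree_monomial _ (one_ne_zero), sum_eq_degree]
      omega
    rw [M_monomial, hsub]
    have hc' : (1 : ℝ) * (∏ i, ((s i).descFactorial (J i) : ℝ)) *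
        ∏ j ∈ Finset.range k, ((a : ℝ) - j - ∑ i, (((Finsupp.single i₀ m) i : ℕ) : ℝ)) ≠ 0 := by
      rw [one_mul]
      apply mul_ne_zero
      · apply Finset.prod_ne_zero_iff.mpr
        intro i _
        rw [Nat.cast_ne_zero, Ne, Nat.descFactorial_eq_zero_iff_lt, not_lt]
        exact hsJ i
      · apply Finset.prod_ne_zero_iff.mpr
        intro j hj
        rw [haR, ← Nat.cast_sum, hsingle_sum, hmR]
        have hjk' : (j : ℝ) < (k : ℝ) := by
          exact_mod_cast Finset.mem_range.mp hj
        intro hzero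
        nlinarith [hzero]
    constructor
    · rw [Ne, monomial_eq_zero]
      exact hc'
    · rw [totalDegree_monomial _ hc', sum_eq_degree]
      have : ∑ i, (toF I + Finsupp.single i₀ m) i = mwt I + m := hexp I
      omega
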